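/- Let n ≥ 3, N₀ ≠ 0 real, b ∈ ℝ, and let H be the polynomial of degree n with Σ_{k≥0} H(k)t^k = N₀(1 + b t + b t² + t³)/(1-t)^{n+1}. Define C by: leading coefficient of H = C/((n-2)ⁿ n!) and D by: coefficient of z^{n-2} of H = (C+D)/(12(n-2)^{n-2}(n-2)!). Then C = 2N₀(b+1)(n-2)ⁿ, D = N₀(n-2)^{n-2}(24 + (b+1)(n-2)(n-3)), and hence D - ((n-3)/(2(n-2)))·C = 24 N₀ (n-2)^{n-2}. -/

import Mathlib

/-!
For `k ≥ 0` and `j ≤ n`, `n! * C(n + k - j, n)` is the falling factorial of degree `n`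
evaluated at `k + n - j`, so `H` is `N₀ / n!` times a sum of four shifted falling-factorial polynomials. Their
coefficients of degree `n` and `n - 2` are `1` and the second elementary symmetric function of the
shifted roots, which is computed by peeling off one linear factor at a time.
-/

open Polynomial

section CommRing

variable {R : Type*} [CommRing R]

theorem coeff_mul_X_add_C_succ (p : R[X]) (a : R) (k : ℕ) :
    (p * (X + C a)).coeff (k + 1) = p.coeff k + a * p.coeff (k + 1) := by
  rw [mul_add, coeff_add, coeff_mul_X, coeff_mul_C, mul_comm]

theorem descPochhammer_comp_X_add_C_succ (a : R) (m : ℕ) :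
    (descPochhammer R (m + 1)).comp (X + C a)
      = (descPochhammer R m).comp (X + C a) * (X + C (a - m)) := by
  rw [descPochhammer_succ_right, mul_comp, sub_comp, X_comp, natCast_comp, map_sub, map_natCast]
  ring

theorem eval_descPochhammer_comp_X_add_C_sub (n j k : ℕ) (hj : j ≤ n) :
    ((descPochhammer R n).comp (X + C ((n : R) - j))).eval (k : R)
      = n.factorial * (n + k - j).choose n := by
  have hshift : (k : R) + ((n : R) - j) = ((n + k - j : ℕ) : R) := by
    rw [Nat.cast_sub (by omega)]; push_cast; ring
  rw [eval_comp, eval_add, eval_X, eval_C, hshift, descPochhammer_eval_eq_descFactorial,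
    Nat.descFactorial_eq_factorial_mul_choose, Nat.cast_mul]

theorem coeff_descPochhammer_comp_X_add_C_self [IsDomain R] (a : R) (n : ℕ) :
    ((descPochhammer R n).comp (X + C a)).coeff n = 1 := by
  have hmonic := (monic_descPochhammer R n).comp_X_add_C a
  rwa [Monic, leadingCoeff, natDegree_comp, descPochhammer_natDegree, natDegree_X_add_C,
    mul_one] at hmonic

theorem Polynomial.eq_of_eval_natCast_eq [IsDomain R] [CharZero R] {p q : R[X]}
    (h : ∀ k : ℕ, p.eval (k : R) = q.eval (k : R)) : p = q :=
  eq_of_infinite_eval_eq p q <|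
    (Set.infinite_range_of_injective Nat.cast_injective).mono <| by
      rintro _ ⟨k, rfl⟩
      exact h k

end CommRing

section Field

variable {K : Type*} [Field K] [CharZero K]

theorem coeff_descPochhammer_comp_X_add_C_succ_self (a : K) : ∀ m : ℕ,
    ((descPochhammer K (m + 1)).comp (X + C a)).coeff m = (m + 1) * a - (m + 1) * m / 2
  | 0 => by simp
  | m + 1 => by
    rw [descPochhammer_comp_X_add_C_succ, coeff_mul_X_add_C_succ,
      coeff_descPochhammer_comp_X_add_C_succ_self a m, coeff_descPochhammer_comp_X_add_C_self]
    push_cast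
    ring

theorem coeff_descPochhammer_comp_X_add_C_sub_two (a : K) {n : ℕ} (hn : 2 ≤ n) :
    ((descPochhammer K n).comp (X + C a)).coeff (n - 2) =
      n * (n - 1) / 2 * a ^ 2 - n * (n - 1) ^ 2 / 2 * a
        + n * (n - 1) * (n - 2) * (3 * n - 1) / 24 := by
  obtain ⟨m, rfl⟩ : ∃ m, n = m + 2 := ⟨n - 2, by omega⟩
  rw [Nat.add_sub_cancel]
  induction m with
  | zero =>
    norm_num [coeff_zero_eq_eval_zero, descPochhammer_succ_right, sq, mul_sub]
  | succ m ih =>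
    rw [show m + 1 + 2 = m + 2 + 1 by omega, descPochhammer_comp_X_add_C_succ,
      coeff_mul_X_add_C_succ, ih (by omega), coeff_descPochhammer_comp_X_add_C_succ_self]
    push_cast
    ring

-- `∑ₖ H(k) tᵏ = N₀ (1 + b t + b t² + t³) / (1 - t)ⁿ⁺¹`: the factor `tʲ` shifts the argument
-- by `j`.
noncomputable def hilbertPolyCubic (n : ℕ) (N₀ b : K) : K[X] :=
  let shift (j : ℕ) := (descPochhammer K n).comp (X + C ((n : K) - j))
  C (N₀ / n.factorial) * (shift 3 + C b * shift 2 + C b * shift 1 + shift 0)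

theorem eval_hilbertPolyCubic_natCast {n : ℕ} (hn : 3 ≤ n) (N₀ b : K) (k : ℕ) :
    (hilbertPolyCubic n N₀ b).eval (k : K) =
      N₀ * (((n + k - 3).choose n : K) + b * ((n + k - 2).choose n : K) +
        b * ((n + k - 1).choose n : K) + ((n + k).choose n : K)) := by
  have hfac : (n.factorial : K) ≠ 0 := Nat.cast_ne_zero.mpr n.factorial_ne_zero
  simp only [hilbertPolyCubic, eval_mul, eval_add, eval_C]
  rw [eval_descPochhammer_comp_X_add_C_sub n 3 k hn,
    eval_descPochhammer_comp_X_add_C_sub n 2 k (by omega),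
    eval_descPochhammer_comp_X_add_C_sub n 1 k (by omega),
    eval_descPochhammer_comp_X_add_C_sub n 0 k (by omega)]
  field_simp
  simp only [tsub_zero]

theorem coeff_hilbertPolyCubic_self (n : ℕ) (N₀ b : K) :
    (hilbertPolyCubic n N₀ b).coeff n = 2 * N₀ * (b + 1) / n.factorial := by
  simp only [hilbertPolyCubic, coeff_C_mul, coeff_add, coeff_descPochhammer_comp_X_add_C_self]
  ring

theorem coeff_hilbertPolyCubic_sub_two {n : ℕ} (hn : 2 ≤ n) (N₀ b : K) :
    (hilbertPolyCubic n N₀ b).coeff (n - 2) =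
      N₀ * (24 + (b + 1) * (n - 2) * (3 * n - 7)) / (12 * (n - 2).factorial) := by
  obtain ⟨m, rfl⟩ : ∃ m, n = m + 2 := ⟨n - 2, by omega⟩
  have hfac : ((m + 2).factorial : K) = (m + 2) * (m + 1) * m.factorial := by
    push_cast [Nat.factorial_succ]; ring
  have hfac0 : (m.factorial : K) ≠ 0 := Nat.cast_ne_zero.mpr m.factorial_ne_zero
  have h1 : (m : K) + 1 ≠ 0 := by norm_cast
  have h2 : (m : K) + 2 ≠ 0 := by norm_cast
  have hcoeff (a : K) := coeff_descPochhammer_comp_X_add_C_sub_two a hn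
  rw [Nat.add_sub_cancel] at hcoeff ⊢
  simp only [hilbertPolyCubic, coeff_C_mul, coeff_add, hcoeff, hfac]
  push_cast
  field_simp
  ring

end Field

theorem stmt14_general (n : ℕ) (hn : 3 ≤ n) (N₀ b C D : ℝ) (H : Polynomial ℝ)
    (hH : ∀ k : ℕ, H.eval (k : ℝ) =
      N₀ * (((n + k - 3).choose n : ℝ) + b * ((n + k - 2).choose n : ℝ) +
        b * ((n + k - 1).choose n : ℝ) + ((n + k).choose n : ℝ)))
    (hC : H.coeff n = C / (((n : ℝ) - 2) ^ n * n.factorial))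
    (hD : H.coeff (n - 2) = (C + D) / (12 * ((n : ℝ) - 2) ^ (n - 2) * (n - 2).factorial)) :
    C = 2 * N₀ * (b + 1) * ((n : ℝ) - 2) ^ n ∧
      D = N₀ * ((n : ℝ) - 2) ^ (n - 2) * (24 + (b + 1) * ((n : ℝ) - 2) * ((n : ℝ) - 3)) ∧
      D - (((n : ℝ) - 3) / (2 * ((n : ℝ) - 2))) * C = 24 * N₀ * ((n : ℝ) - 2) ^ (n - 2) := by
  have hHilb : H = hilbertPolyCubic n N₀ b :=
    eq_of_eval_natCast_eq fun k => by rw [hH, eval_hilbertPolyCubic_natCast hn]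
  have hr : (n : ℝ) - 2 ≠ 0 := sub_ne_zero.mpr (by norm_cast; omega)
  rw [hHilb, coeff_hilbertPolyCubic_self, eq_div_iff (by positivity)] at hC
  rw [hHilb, coeff_hilbertPolyCubic_sub_two (by omega), eq_div_iff (by positivity)]
    at hD
  have hpow : ((n : ℝ) - 2) ^ n = ((n : ℝ) - 2) ^ (n - 2) * ((n : ℝ) - 2) ^ 2 := by
    rw [← pow_add, Nat.sub_add_cancel (by omega)]
  have hCval : C = 2 * N₀ * (b + 1) * ((n : ℝ) - 2) ^ n := by
    rw [← hC]
    field_simp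
  have hDval :
      D = N₀ * ((n : ℝ) - 2) ^ (n - 2) * (24 + (b + 1) * ((n : ℝ) - 2) * ((n : ℝ) - 3)) := by
    field_simp at hD
    linear_combination -hD - hCval - 2 * N₀ * (b + 1) * hpow
  refine ⟨hCval, hDval, ?_⟩
  rw [hCval, hDval, hpow]
  field_simp
  ring

theorem stmt14 (n : ℕ) (hn : 3 ≤ n) (N₀ b C D : ℝ) (hN₀ : N₀ ≠ 0) (H : Polynomial ℝ)
    (hH : ∀ k : ℕ, H.eval (k : ℝ) =
      N₀ * (((n + k - 3).choose n : ℝ) + b * ((n + k - 2).choose n : ℝ) +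
        b * ((n + k - 1).choose n : ℝ) + ((n + k).choose n : ℝ)))
    (hC : H.coeff n = C / (((n : ℝ) - 2) ^ n * n.factorial))
    (hD : H.coeff (n - 2) = (C + D) / (12 * ((n : ℝ) - 2) ^ (n - 2) * (n - 2).factorial)) :
    C = 2 * N₀ * (b + 1) * ((n : ℝ) - 2) ^ n ∧
      D = N₀ * ((n : ℝ) - 2) ^ (n - 2) * (24 + (b + 1) * ((n : ℝ) - 2) * ((n : ℝ) - 3)) ∧
      D - (((n : ℝ) - 3) / (2 * ((n : ℝ) - 2))) * C = 24 * N₀ * ((n : ℝ) - 2) ^ (n - 2) :=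
  stmt14_general n hn N₀ b C D H hH hC hD
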